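/- Consider the 2×2 game with payoff matrices a = [[2,0],[4,1]] and b = [[2,1],[4,3]]. The set of dependency equilibria D = { P ∈ ℝ^{2×2} : all p_{ij} > 0, p_{11}+p_{12}+p_{21}+p_{22} = 1, f_1(P) = 0, f_2(P) = 0 }, equipped with the subspace topology from ℝ⁴, has exactly two connected components. -/

import Mathlib

/-!
The Spohn determinants are homogeneous of degree two, so the equilibria are the normalizations of
the positive solutions with `p₂₂ = 1`. Writing `p₂₁ = t`, the first equation reads
`p₁₁ (1 - 2t) = p₁₂ (1 + 4t)`, which forces `t < 1/2`, and the second one then becomes the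
quadratic `(1 + 4t) y² - (1 + t + 6t²) y + t (1 - 2t) = 0` in `y = p₁₂`, whose discriminant is
positive for `t > 0`. So the equilibria form two curves over `t ∈ (0, 1/2)`, one for each root.
The quadratic form `branchPoly` equals `2 (1 + 4t) y - (1 + t + 6t²)` on this chart, a square root
of the discriminant, so it never vanishes on equilibria and its sign tells the two curves apart.
-/

/-- The set of dependency equilibria of the `2 × 2` game with payoff matrices
`a = [[2,0],[4,1]]` and `b = [[2,1],[4,3]]`, as a subset of `ℝ⁴`. -/
def disconnectedGameEquilibria : Set (ℝ × ℝ × ℝ × ℝ) :=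
  {P | (0 < P.1 ∧ 0 < P.2.1 ∧ 0 < P.2.2.1 ∧ 0 < P.2.2.2) ∧
       P.1 + P.2.1 + P.2.2.1 + P.2.2.2 = 1 ∧
       (P.1 + P.2.1) * (4 * P.2.2.1 + 1 * P.2.2.2)
         - (2 * P.1 + 0 * P.2.1) * (P.2.2.1 + P.2.2.2) = 0 ∧
       (P.1 + P.2.2.1) * (1 * P.2.1 + 3 * P.2.2.2)
         - (2 * P.1 + 4 * P.2.2.1) * (P.2.1 + P.2.2.2) = 0}

open Set Function

theorem Continuous.connectedComponentsLift_bijective {X Y : Type*} [TopologicalSpace X]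
    [TopologicalSpace Y] [TotallyDisconnectedSpace Y] {f : X → Y} (hf : Continuous f)
    (hsurj : Surjective f) (hfiber : ∀ y, IsPreconnected (f ⁻¹' {y})) :
    Bijective hf.connectedComponentsLift := by
  refine ⟨fun a b hab ↦ ?_, ?_⟩
  · obtain ⟨a, rfl⟩ := ConnectedComponents.surjective_coe a
    obtain ⟨b, rfl⟩ := ConnectedComponents.surjective_coe b
    rw [hf.connectedComponentsLift_apply_coe, hf.connectedComponentsLift_apply_coe] at hab
    exact ConnectedComponents.coe_eq_coe'.mpr
      ((hfiber (f b)).subset_connectedComponent rfl hab)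
  · rw [← hf.connectedComponentsLift_comp_coe] at hsurj
    exact hsurj.of_comp

theorem ConnectedComponents.nat_card_eq_two_of_ne_zero {X : Type*} [TopologicalSpace X]
    {g : X → ℝ} (hg : Continuous g) (hg0 : ∀ x, g x ≠ 0)
    (hpos : IsPreconnected {x | 0 < g x}) (hneg : IsPreconnected {x | g x < 0})
    (hpos' : {x | 0 < g x}.Nonempty) (hneg' : {x | g x < 0}.Nonempty) :
    Nat.card (ConnectedComponents X) = 2 := by
  set f : X → Bool := fun x ↦ decide (0 < g x)
  have hfiber : ∀ b, f ⁻¹' {b} = if b then {x | 0 < g x} else {x | g x < 0} := by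
    intro b
    ext x
    cases b <;> simp [f, le_iff_lt_or_eq, hg0 x]
  have hf : Continuous f := by
    refine continuous_discrete_rng.mpr fun b ↦ ?_
    rw [hfiber]
    cases b
    · exact isOpen_lt hg continuous_const
    · exact isOpen_lt continuous_const hg
  have hsurj : Surjective f := by
    intro b
    cases b
    · obtain ⟨x, hx⟩ := hneg'
      exact ⟨x, by simpa [f] using hx.le⟩
    · obtain ⟨x, hx⟩ := hpos'
      exact ⟨x, by simpa [f] using hx⟩
  have hfiber_pre (b : Bool) : IsPreconnected (f ⁻¹' {b}) := by
    rw [hfiber]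
    cases b
    exacts [hneg, hpos]
  rw [Nat.card_eq_of_bijective _ (hf.connectedComponentsLift_bijective hsurj hfiber_pre),
    Nat.card_eq_fintype_card, Fintype.card_bool]

noncomputable section

namespace DisconnectedGame

def total (P : ℝ × ℝ × ℝ × ℝ) : ℝ := P.1 + P.2.1 + P.2.2.1 + P.2.2.2

def normalize (P : ℝ × ℝ × ℝ × ℝ) : ℝ × ℝ × ℝ × ℝ := (total P)⁻¹ • P

-- `P = (p₁₁, p₁₂, p₂₁, p₂₂)`, and matrix indices start at `0`.
def spohn₁ (a : Matrix (Fin 2) (Fin 2) ℝ) (P : ℝ × ℝ × ℝ × ℝ) : ℝ :=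
  (P.1 + P.2.1) * (a 1 0 * P.2.2.1 + a 1 1 * P.2.2.2)
    - (a 0 0 * P.1 + a 0 1 * P.2.1) * (P.2.2.1 + P.2.2.2)

def spohn₂ (b : Matrix (Fin 2) (Fin 2) ℝ) (P : ℝ × ℝ × ℝ × ℝ) : ℝ :=
  (P.1 + P.2.2.1) * (b 0 1 * P.2.1 + b 1 1 * P.2.2.2)
    - (b 0 0 * P.1 + b 1 0 * P.2.2.1) * (P.2.1 + P.2.2.2)

def payoffA : Matrix (Fin 2) (Fin 2) ℝ := !![2, 0; 4, 1]

def payoffB : Matrix (Fin 2) (Fin 2) ℝ := !![2, 1; 4, 3]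

variable {P : ℝ × ℝ × ℝ × ℝ}

theorem mem_disconnectedGameEquilibria :
    P ∈ disconnectedGameEquilibria ↔
      (0 < P.1 ∧ 0 < P.2.1 ∧ 0 < P.2.2.1 ∧ 0 < P.2.2.2) ∧ total P = 1 ∧
        spohn₁ payoffA P = 0 ∧ spohn₂ payoffB P = 0 :=
  Iff.rfl

theorem total_pos (h : 0 < P.1 ∧ 0 < P.2.1 ∧ 0 < P.2.2.1 ∧ 0 < P.2.2.2) : 0 < total P := by
  obtain ⟨h1, h2, h3, h4⟩ := h
  unfold total
  positivity

theorem total_smul (c : ℝ) (P : ℝ × ℝ × ℝ × ℝ) : total (c • P) = c * total P := by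
  simp only [total, Prod.smul_fst, Prod.smul_snd, smul_eq_mul]
  ring

theorem normalize_smul {c : ℝ} (hc : c ≠ 0) (P : ℝ × ℝ × ℝ × ℝ) :
    normalize (c • P) = normalize P := by
  rw [normalize, normalize, total_smul, smul_smul, mul_inv, mul_right_comm, inv_mul_cancel₀ hc,
    one_mul]

theorem normalize_eq_self (h : total P = 1) : normalize P = P := by
  rw [normalize, h, inv_one, one_smul]

theorem continuousOn_normalize : ContinuousOn normalize {P | total P ≠ 0} := by
  have htotal : Continuous total := by
    unfold total
    fun_prop
  exact (htotal.continuousOn.inv₀ fun _ h ↦ h).smul continuousOn_id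

theorem spohn₁_smul (a : Matrix (Fin 2) (Fin 2) ℝ) (c : ℝ) (P : ℝ × ℝ × ℝ × ℝ) :
    spohn₁ a (c • P) = c ^ 2 * spohn₁ a P := by
  simp only [spohn₁, Prod.smul_fst, Prod.smul_snd, smul_eq_mul]
  ring

theorem spohn₂_smul (b : Matrix (Fin 2) (Fin 2) ℝ) (c : ℝ) (P : ℝ × ℝ × ℝ × ℝ) :
    spohn₂ b (c • P) = c ^ 2 * spohn₂ b P := by
  simp only [spohn₂, Prod.smul_fst, Prod.smul_snd, smul_eq_mul]
  ring

theorem normalize_mem (hpos : 0 < P.1 ∧ 0 < P.2.1 ∧ 0 < P.2.2.1 ∧ 0 < P.2.2.2)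
    (h₁ : spohn₁ payoffA P = 0) (h₂ : spohn₂ payoffB P = 0) :
    normalize P ∈ disconnectedGameEquilibria := by
  have hT := total_pos hpos
  obtain ⟨h1, h2, h3, h4⟩ := hpos
  refine mem_disconnectedGameEquilibria.mpr ⟨?_, ?_, ?_, ?_⟩
  · simp only [normalize, Prod.smul_fst, Prod.smul_snd, smul_eq_mul]
    exact ⟨by positivity, by positivity, by positivity, by positivity⟩
  · rw [normalize, total_smul, inv_mul_cancel₀ hT.ne']
  · rw [normalize, spohn₁_smul, h₁, mul_zero]
  · rw [normalize, spohn₂_smul, h₂, mul_zero]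

def linCoeff (t : ℝ) : ℝ := 1 + t + 6 * t ^ 2

def discr (t : ℝ) : ℝ := discrim (1 + 4 * t) (-linCoeff t) (t * (1 - 2 * t))

theorem discr_pos {t : ℝ} (ht : 0 < t) : 0 < discr t := by
  unfold discr discrim linCoeff
  nlinarith [sq_nonneg (t - 1 / 5), pow_pos ht 3, pow_pos ht 4]

theorem sqrt_discr_lt {t : ℝ} (ht : t ∈ Ioo 0 (1 / 2)) : √(discr t) < linCoeff t := by
  obtain ⟨h0, h1⟩ := ht
  have hlin : 0 < linCoeff t := by unfold linCoeff; positivity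
  rw [Real.sqrt_lt' hlin, discr, discrim]
  have : 0 < (1 + 4 * t) * (t * (1 - 2 * t)) := by
    have : 0 < 1 - 2 * t := by linarith
    positivity
  linarith

theorem linCoeff_add_mul_sqrt_discr_pos {e t : ℝ} (he : e = 1 ∨ e = -1)
    (ht : t ∈ Ioo 0 (1 / 2)) : 0 < linCoeff t + e * √(discr t) := by
  have := sqrt_discr_lt ht
  have := Real.sqrt_nonneg (discr t)
  rcases he with rfl | rfl <;> linarith

theorem spohn₁_payoffA_chart (x y t : ℝ) :
    spohn₁ payoffA (x, y, t, 1) = y * (1 + 4 * t) - x * (1 - 2 * t) := by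
  simp only [spohn₁, payoffA, Matrix.of_apply, Matrix.cons_val', Matrix.cons_val_zero,
    Matrix.cons_val_one, Matrix.cons_val_fin_one]
  ring

theorem spohn₂_payoffB_chart (x y t : ℝ) :
    spohn₂ payoffB (x, y, t, 1) = x * (1 - y) - t * (1 + 3 * y) := by
  simp only [spohn₂, payoffB, Matrix.of_apply, Matrix.cons_val', Matrix.cons_val_zero,
    Matrix.cons_val_one, Matrix.cons_val_fin_one]
  ring

-- The quadratic is written in the `a * (y * y) + b * y + c` shape of `discrim`'s API.
theorem spohn_chart_eq_zero_iff {x y t : ℝ} (hx : x ≠ 0) (ht : 1 - 2 * t ≠ 0) :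
    spohn₁ payoffA (x, y, t, 1) = 0 ∧ spohn₂ payoffB (x, y, t, 1) = 0 ↔
      x * (1 - 2 * t) = y * (1 + 4 * t) ∧
        (1 + 4 * t) * (y * y) + -linCoeff t * y + t * (1 - 2 * t) = 0 := by
  rw [spohn₁_payoffA_chart, spohn₂_payoffB_chart, linCoeff]
  constructor
  · rintro ⟨h₁, h₂⟩
    refine ⟨by linear_combination -h₁, mul_left_cancel₀ hx ?_⟩
    linear_combination -(1 - 2 * t) * x * h₂ - x * (1 - y) * h₁
  · rintro ⟨hL, hQ⟩
    refine ⟨by linear_combination -hL, mul_left_cancel₀ ht ?_⟩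
    linear_combination -hQ - (y - 1) * hL

def chartPoint (u t : ℝ) : ℝ × ℝ × ℝ × ℝ :=
  ((linCoeff t + u) / (2 * (1 - 2 * t)), (linCoeff t + u) / (2 * (1 + 4 * t)), t, 1)

theorem chartPoint_pos {u t : ℝ} (ht : t ∈ Ioo 0 (1 / 2)) (hu : 0 < linCoeff t + u) :
    0 < (chartPoint u t).1 ∧ 0 < (chartPoint u t).2.1 ∧ 0 < (chartPoint u t).2.2.1 ∧
      0 < (chartPoint u t).2.2.2 := by
  obtain ⟨h0, h1⟩ := ht
  have : 0 < 1 - 2 * t := by linarith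
  simp only [chartPoint]
  exact ⟨by positivity, by positivity, h0, one_pos⟩

theorem spohn_chartPoint {u t : ℝ} (ht : t ∈ Ioo 0 (1 / 2)) (hu : u ^ 2 = discr t)
    (hpos : 0 < linCoeff t + u) :
    spohn₁ payoffA (chartPoint u t) = 0 ∧ spohn₂ payoffB (chartPoint u t) = 0 := by
  obtain ⟨h0, h1⟩ := ht
  have ha : 1 + 4 * t ≠ 0 := by linarith
  have hb : 1 - 2 * t ≠ 0 := by linarith
  refine (spohn_chart_eq_zero_iff (chartPoint_pos ⟨h0, h1⟩ hpos).1.ne' hb).mpr ⟨?_, ?_⟩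
  · simp only [chartPoint]
    field_simp
  · rw [quadratic_eq_zero_iff ha (by rw [← sq, hu, discr])]
    left
    rw [neg_neg]

theorem eq_chartPoint_of_spohn_eq_zero {x y t : ℝ} (hx : 0 < x) (hy : 0 < y) (ht : 0 < t)
    (h₁ : spohn₁ payoffA (x, y, t, 1) = 0) (h₂ : spohn₂ payoffB (x, y, t, 1) = 0) :
    t < 1 / 2 ∧ (2 * (1 + 4 * t) * y - linCoeff t) ^ 2 = discr t ∧
      (x, y, t, 1) = chartPoint (2 * (1 + 4 * t) * y - linCoeff t) t := by
  have hL : x * (1 - 2 * t) = y * (1 + 4 * t) := by rw [spohn₁_payoffA_chart] at h₁; linarith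
  have ht' : t < 1 / 2 := by nlinarith [mul_pos hy (by linarith : 0 < 1 + 4 * t)]
  obtain ⟨-, hQ⟩ := (spohn_chart_eq_zero_iff hx.ne' (by linarith)).mp ⟨h₁, h₂⟩
  refine ⟨ht', by rw [discr, discrim_eq_sq_of_quadratic_eq_zero hQ]; ring, ?_⟩
  have ha : 1 + 4 * t ≠ 0 := by linarith
  have hb : 1 - 2 * t ≠ 0 := by linarith
  simp only [chartPoint, add_sub_cancel, Prod.mk.injEq, and_true]
  constructor <;> field_simp
  linarith

theorem mem_iff_exists_chartPoint :
    P ∈ disconnectedGameEquilibria ↔ ∃ t ∈ Ioo 0 (1 / 2), ∃ u, u ^ 2 = discr t ∧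
      0 < linCoeff t + u ∧ P = normalize (chartPoint u t) := by
  constructor
  · obtain ⟨x, y, z, w⟩ := P
    rw [mem_disconnectedGameEquilibria]
    rintro ⟨⟨hx, hy, hz, hw⟩, hsum, h₁, h₂⟩
    have hchart : w⁻¹ • (x, y, z, w) = (x / w, y / w, z / w, 1) := by
      simp only [Prod.smul_mk, smul_eq_mul, inv_mul_eq_div, div_self hw.ne']
    have h₁' : spohn₁ payoffA (x / w, y / w, z / w, 1) = 0 := by
      rw [← hchart, spohn₁_smul, h₁, mul_zero]
    have h₂' : spohn₂ payoffB (x / w, y / w, z / w, 1) = 0 := by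
      rw [← hchart, spohn₂_smul, h₂, mul_zero]
    obtain ⟨ht, hdiscr, hpoint⟩ :=
      eq_chartPoint_of_spohn_eq_zero (div_pos hx hw) (div_pos hy hw) (div_pos hz hw) h₁' h₂'
    refine ⟨z / w, ⟨div_pos hz hw, ht⟩, _, hdiscr, ?_, ?_⟩
    · rw [add_sub_cancel]
      have : 0 < 1 + 4 * (z / w) := by positivity
      positivity
    · rw [← hpoint, ← hchart, normalize_smul (inv_ne_zero hw.ne'), normalize_eq_self hsum]
  · rintro ⟨t, ht, u, hu, hpos, rfl⟩
    obtain ⟨h₁, h₂⟩ := spohn_chartPoint ht hu hpos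
    exact normalize_mem (chartPoint_pos ht hpos) h₁ h₂

def branchPoly (P : ℝ × ℝ × ℝ × ℝ) : ℝ :=
  2 * P.2.1 * P.2.2.2 + 8 * P.2.1 * P.2.2.1 - P.2.2.2 ^ 2 - P.2.2.1 * P.2.2.2 - 6 * P.2.2.1 ^ 2

theorem continuous_branchPoly : Continuous branchPoly := by
  unfold branchPoly
  fun_prop

theorem branchPoly_smul (c : ℝ) (P : ℝ × ℝ × ℝ × ℝ) :
    branchPoly (c • P) = c ^ 2 * branchPoly P := by
  simp only [branchPoly, Prod.smul_fst, Prod.smul_snd, smul_eq_mul]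
  ring

theorem branchPoly_normalize_chartPoint {u t : ℝ} (ht : 1 + 4 * t ≠ 0) :
    branchPoly (normalize (chartPoint u t)) = (total (chartPoint u t))⁻¹ ^ 2 * u := by
  rw [normalize, branchPoly_smul]
  congr 1
  simp only [branchPoly, chartPoint, linCoeff]
  linear_combination div_mul_cancel₀ (1 + t + 6 * t ^ 2 + u) (mul_ne_zero two_ne_zero ht)

theorem branchPoly_ne_zero (hP : P ∈ disconnectedGameEquilibria) : branchPoly P ≠ 0 := by
  obtain ⟨t, ht, u, hu, hpos, rfl⟩ := mem_iff_exists_chartPoint.mp hP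
  have hT := total_pos (chartPoint_pos ht hpos)
  have hu0 : u ≠ 0 := by
    rintro rfl
    exact (discr_pos ht.1).ne' (by rw [← hu]; ring)
  rw [branchPoly_normalize_chartPoint (by linarith [ht.1])]
  positivity

def branch (e : ℝ) : Set (ℝ × ℝ × ℝ × ℝ) :=
  {P | P ∈ disconnectedGameEquilibria ∧ 0 < e * branchPoly P}

theorem branch_eq_image {e : ℝ} (he : e = 1 ∨ e = -1) :
    branch e = (fun t ↦ normalize (chartPoint (e * √(discr t)) t)) '' Ioo 0 (1 / 2) := by
  ext P
  constructor
  · rintro ⟨hP, hsign⟩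
    obtain ⟨t, ht, u, hu, hpos, rfl⟩ := mem_iff_exists_chartPoint.mp hP
    rw [branchPoly_normalize_chartPoint (by linarith [ht.1]), mul_left_comm] at hsign
    have heu : 0 < e * u := pos_of_mul_pos_right hsign (sq_nonneg _)
    refine ⟨t, ht, ?_⟩
    dsimp only
    rw [← hu, Real.sqrt_sq_eq_abs]
    congr 2
    rcases he with rfl | rfl <;> cases abs_cases u <;> linarith
  · rintro ⟨t, ht, rfl⟩
    have hee : e * e = 1 := by rcases he with rfl | rfl <;> norm_num
    have hsq : (e * √(discr t)) ^ 2 = discr t := by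
      rw [mul_pow, Real.sq_sqrt (discr_pos ht.1).le, sq, hee, one_mul]
    have hpos := linCoeff_add_mul_sqrt_discr_pos he ht
    refine ⟨mem_iff_exists_chartPoint.mpr ⟨t, ht, _, hsq, hpos, rfl⟩, ?_⟩
    rw [branchPoly_normalize_chartPoint (by linarith [ht.1])]
    set T := total (chartPoint (e * √(discr t)) t)
    have hT : 0 < T := total_pos (chartPoint_pos ht hpos)
    have hd := Real.sqrt_pos.mpr (discr_pos ht.1)
    have hsign : e * (T⁻¹ ^ 2 * (e * √(discr t))) = T⁻¹ ^ 2 * √(discr t) := by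
      linear_combination T⁻¹ ^ 2 * √(discr t) * hee
    rw [hsign]
    positivity

theorem continuousOn_normalize_chartPoint {e : ℝ} (he : e = 1 ∨ e = -1) :
    ContinuousOn (fun t ↦ normalize (chartPoint (e * √(discr t)) t)) (Ioo 0 (1 / 2)) := by
  refine continuousOn_normalize.comp ?_ fun t ht ↦
    (total_pos (chartPoint_pos ht (linCoeff_add_mul_sqrt_discr_pos he ht))).ne'
  unfold chartPoint discr discrim linCoeff
  fun_prop (disch := intro t ht; simp only [mem_Ioo] at ht; linarith)

theorem isPreconnected_branch {e : ℝ} (he : e = 1 ∨ e = -1) : IsPreconnected (branch e) := by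
  rw [branch_eq_image he]
  exact isPreconnected_Ioo.image _ (continuousOn_normalize_chartPoint he)

theorem branch_nonempty {e : ℝ} (he : e = 1 ∨ e = -1) : (branch e).Nonempty := by
  rw [branch_eq_image he]
  exact (nonempty_Ioo.mpr (by norm_num)).image _

theorem image_val_setOf_mul_branchPoly_pos (e : ℝ) :
    Subtype.val '' {P : disconnectedGameEquilibria | 0 < e * branchPoly P} = branch e := by
  ext P
  simp [branch, and_comm]

theorem isPreconnected_setOf_mul_branchPoly_pos {e : ℝ} (he : e = 1 ∨ e = -1) :
    IsPreconnected {P : disconnectedGameEquilibria | 0 < e * branchPoly P} := by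
  rw [← Topology.IsInducing.subtypeVal.isPreconnected_image,
    image_val_setOf_mul_branchPoly_pos]
  exact isPreconnected_branch he

theorem nonempty_setOf_mul_branchPoly_pos {e : ℝ} (he : e = 1 ∨ e = -1) :
    {P : disconnectedGameEquilibria | 0 < e * branchPoly P}.Nonempty := by
  rw [← image_nonempty, image_val_setOf_mul_branchPoly_pos]
  exact branch_nonempty he

end DisconnectedGame

open DisconnectedGame

theorem disconnected_game_two_components :
    Nat.card (ConnectedComponents ↥disconnectedGameEquilibria) = 2 := by
  have hpos := isPreconnected_setOf_mul_branchPoly_pos (Or.inl rfl)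
  have hneg := isPreconnected_setOf_mul_branchPoly_pos (Or.inr rfl)
  have hpos' := nonempty_setOf_mul_branchPoly_pos (Or.inl rfl)
  have hneg' := nonempty_setOf_mul_branchPoly_pos (Or.inr rfl)
  simp only [one_mul, neg_one_mul, neg_pos] at hpos hpos' hneg hneg'
  exact ConnectedComponents.nat_card_eq_two_of_ne_zero
    (continuous_branchPoly.comp continuous_subtype_val) (fun P ↦ branchPoly_ne_zero P.2)
    hpos hneg hpos' hneg'
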